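/- arXiv:1501.00112 — 2 statements merged into one kernel-verified Lean document; each statement's English description precedes it below -/
import Mathlib

section
/- For t > 0 and all (q,p) ∈ ℝ², the function ψ_t(q,p) = (2π)^{-1/2} ∫_ℝ e^{i p₀ q/ħ} e^{-t(p+p₀)²/(2ħ)} ψ̃(p₀) dp₀ (with ψ̃ ∈ L¹(ℝ)) can be written as ψ_t(q,p) = f(q + i t p) e^{-t p²/(2ħ)} where f is a holomorphic function of z = q + i t p on ℂ; explicitly f(z) = (2π)^{-1/2} ∫_ℝ e^{i p₀ z/ħ} e^{-t p₀²/(2ħ)} ψ̃(p₀) dp₀. -/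
/-!
Expanding the square, `-t(p + p₀)²/2ħ = -t p₀²/2ħ - t p₀ p/ħ - t p²/2ħ`, and the cross term
`-t p₀ p/ħ = i p₀ (i t p)/ħ` shifts `q` to `q + i t p` in the oscillating factor, which gives the
factorization pointwise in `p₀`. The function `f` is entire because `z ↦ e^{i p₀ z/ħ}` is, and since
`ψ̃` has compact support the `z`-derivative of the integrand is dominated by a multiple of `|ψ̃|`
locally uniformly in `z`, so one may differentiate under the integral sign.
-/

open MeasureTheory Complex

namespace MeasureTheory.Integrable

variable {μ : Measure ℝ} {ψ : ℝ → ℂ}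

theorem continuous_mul_of_hasCompactSupport (hψ : Integrable ψ μ) (hψc : HasCompactSupport ψ)
    {g : ℝ → ℂ} (hg : Continuous g) : Integrable (fun p => g p * ψ p) μ := by
  have hon : IntegrableOn (fun p => ψ p * g p) (tsupport ψ) μ :=
    hψ.integrableOn.mul_continuousOn_of_subset hg.continuousOn
      (isClosed_tsupport ψ).measurableSet hψc subset_rfl
  refine (integrableOn_iff_integrable_of_support_subset ?_).mp (by simpa only [mul_comm] using hon)
  exact (Function.support_mul_subset_right g ψ).trans (subset_tsupport ψ)

end MeasureTheory.Integrable

section DifferentiationUnderIntegral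

variable {μ : Measure ℝ} {ψ : ℝ → ℂ}

theorem differentiable_integral_mul_of_hasCompactSupport {f f' : ℂ → ℝ → ℂ}
    (hf : ∀ z p, HasDerivAt (f · p) (f' z p) z) (hfc : ∀ z, Continuous (f z))
    (hf'c : Continuous (Function.uncurry f')) (hψ : Integrable ψ μ) (hψc : HasCompactSupport ψ) :
    Differentiable ℂ fun z => ∫ p, f z p * ψ p ∂μ := by
  intro z₀
  obtain ⟨C, hC⟩ := ((isCompact_closedBall z₀ 1).prod hψc).exists_bound_of_continuousOn
    hf'c.continuousOn
  have h_bound : ∀ p, ∀ z ∈ Metric.ball z₀ 1, ‖f' z p * ψ p‖ ≤ C * ‖ψ p‖ := by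
    intro p z hz
    by_cases hp : p ∈ tsupport ψ
    · rw [norm_mul]
      exact mul_le_mul_of_nonneg_right
        (hC (z, p) ⟨Metric.ball_subset_closedBall hz, hp⟩) (norm_nonneg _)
    · simp [image_eq_zero_of_notMem_tsupport hp]
  have hderiv := hasDerivAt_integral_of_dominated_loc_of_deriv_le
    (F' := fun z p => f' z p * ψ p) (Metric.ball_mem_nhds z₀ one_pos)
    (Filter.Eventually.of_forall fun z => (hfc z).aestronglyMeasurable.mul hψ.1)
    (hψ.continuous_mul_of_hasCompactSupport hψc (hfc z₀))
    ((hf'c.uncurry_left z₀).aestronglyMeasurable.mul hψ.1)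
    (ae_of_all _ h_bound) (hψ.norm.const_mul C)
    (ae_of_all _ fun p z _ => (hf z p).mul_const (ψ p))
  exact hderiv.2.differentiableAt

theorem differentiable_integral_cexp_mul_of_hasCompactSupport {c : ℝ → ℂ} (hc : Continuous c)
    (hψ : Integrable ψ μ) (hψc : HasCompactSupport ψ) :
    Differentiable ℂ fun z => ∫ p, cexp (c p * z) * ψ p ∂μ :=
  differentiable_integral_mul_of_hasCompactSupport (f' := fun z p => cexp (c p * z) * c p)
    (fun z p => by simpa using ((hasDerivAt_id z).const_mul (c p)).cexp)
    (fun z => by fun_prop) (by fun_prop) hψ hψc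

end DifferentiationUnderIntegral

theorem cexp_mul_gaussian_add_eq (ℏ t q p p₀ : ℝ) :
    cexp (I * p₀ * q / ℏ) * ((Real.exp (-t * (p + p₀) ^ 2 / (2 * ℏ)) : ℝ) : ℂ)
      = cexp (I * p₀ * (q + I * t * p) / ℏ) * ((Real.exp (-t * p₀ ^ 2 / (2 * ℏ)) : ℝ) : ℂ)
        * ((Real.exp (-t * p ^ 2 / (2 * ℏ)) : ℝ) : ℂ) := by
  push_cast
  rw [← exp_add, ← exp_add, ← exp_add]
  congr 1
  linear_combination (-(t : ℂ) * p₀ * p / ℏ) * I_sq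

theorem stmt9_general (ℏ t : ℝ) (ψt : ℝ → ℂ)
    (hψ1 : Integrable ψt) (hψc : HasCompactSupport ψt) :
    Differentiable ℂ
      (fun z : ℂ => ((2 * Real.pi : ℝ) : ℂ) ^ (-(1 / 2 : ℂ)) *
        ∫ p₀ : ℝ, Complex.exp (Complex.I * (p₀ : ℂ) * z / (ℏ : ℂ))
          * ((Real.exp (-t * p₀ ^ 2 / (2 * ℏ)) : ℝ) : ℂ) * ψt p₀) ∧
    ∀ q p : ℝ,
      ((2 * Real.pi : ℝ) : ℂ) ^ (-(1 / 2 : ℂ)) *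
          (∫ p₀ : ℝ, Complex.exp (Complex.I * (p₀ : ℂ) * (q : ℂ) / (ℏ : ℂ))
            * ((Real.exp (-t * (p + p₀) ^ 2 / (2 * ℏ)) : ℝ) : ℂ) * ψt p₀)
        = (((2 * Real.pi : ℝ) : ℂ) ^ (-(1 / 2 : ℂ)) *
            ∫ p₀ : ℝ, Complex.exp (Complex.I * (p₀ : ℂ) * ((q : ℂ) + Complex.I * t * p) / (ℏ : ℂ))
              * ((Real.exp (-t * p₀ ^ 2 / (2 * ℏ)) : ℝ) : ℂ) * ψt p₀)
          * ((Real.exp (-t * p ^ 2 / (2 * ℏ)) : ℝ) : ℂ) := by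
  constructor
  · have hG : Continuous fun p₀ : ℝ => ((Real.exp (-t * p₀ ^ 2 / (2 * ℏ)) : ℝ) : ℂ) := by
      fun_prop
    have hweighted := differentiable_integral_cexp_mul_of_hasCompactSupport
      (c := fun p₀ : ℝ => I * p₀ / ℏ) (by fun_prop)
      (hψ1.continuous_mul_of_hasCompactSupport hψc hG)
      (hψc.mul_left (f := fun p₀ : ℝ => ((Real.exp (-t * p₀ ^ 2 / (2 * ℏ)) : ℝ) : ℂ)))
    refine Differentiable.const_mul ?_ _
    have hintegrand : ∀ (z : ℂ) (p₀ : ℝ),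
        cexp (I * p₀ * z / ℏ) * ((Real.exp (-t * p₀ ^ 2 / (2 * ℏ)) : ℝ) : ℂ) * ψt p₀
          = cexp (I * p₀ / ℏ * z) * (((Real.exp (-t * p₀ ^ 2 / (2 * ℏ)) : ℝ) : ℂ) * ψt p₀) :=
      fun z p₀ => by ring_nf
    simp only [hintegrand]
    exact hweighted
  · intro q p
    rw [mul_assoc, ← integral_mul_const]
    congr 1
    refine integral_congr_ae (ae_of_all _ fun p₀ => ?_)
    dsimp only
    rw [mul_right_comm _ (ψt p₀), cexp_mul_gaussian_add_eq]

/-- For `t > 0`, the regularized state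
`ψ_t(q,p) = (2π)^{-1/2} ∫ e^{i p₀ q/ħ} e^{-t(p+p₀)²/(2ħ)} ψ̃(p₀) dp₀` (with `ψ̃` integrable
and compactly supported) is a polarized section: `ψ_t(q,p) = f(q + i t p) e^{-t p²/(2ħ)}`
where `f(z) = (2π)^{-1/2} ∫ e^{i p₀ z/ħ} e^{-t p₀²/(2ħ)} ψ̃(p₀) dp₀` is holomorphic on `ℂ`. -/
theorem stmt9 (ℏ t : ℝ) (hℏ : 0 < ℏ) (ht : 0 < t) (ψt : ℝ → ℂ)
    (hψ1 : Integrable ψt) (hψc : HasCompactSupport ψt) :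
    Differentiable ℂ
      (fun z : ℂ => ((2 * Real.pi : ℝ) : ℂ) ^ (-(1 / 2 : ℂ)) *
        ∫ p₀ : ℝ, Complex.exp (Complex.I * (p₀ : ℂ) * z / (ℏ : ℂ))
          * ((Real.exp (-t * p₀ ^ 2 / (2 * ℏ)) : ℝ) : ℂ) * ψt p₀) ∧
    ∀ q p : ℝ,
      ((2 * Real.pi : ℝ) : ℂ) ^ (-(1 / 2 : ℂ)) *
          (∫ p₀ : ℝ, Complex.exp (Complex.I * (p₀ : ℂ) * (q : ℂ) / (ℏ : ℂ))
            * ((Real.exp (-t * (p + p₀) ^ 2 / (2 * ℏ)) : ℝ) : ℂ) * ψt p₀)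
        = (((2 * Real.pi : ℝ) : ℂ) ^ (-(1 / 2 : ℂ)) *
            ∫ p₀ : ℝ, Complex.exp (Complex.I * (p₀ : ℂ) * ((q : ℂ) + Complex.I * t * p) / (ℏ : ℂ))
              * ((Real.exp (-t * p₀ ^ 2 / (2 * ℏ)) : ℝ) : ℂ) * ψt p₀)
          * ((Real.exp (-t * p ^ 2 / (2 * ℏ)) : ℝ) : ℂ) :=
  stmt9_general ℏ t ψt hψ1 hψc
end

section
/- Fix ħ > 0 and m ∈ ℕ. The function F(h) = h^{m+1/2} e^{-h/ħ} on (0,∞) attains its unique global maximum at h = ħ(m + 1/2), and for any t > 0 the Gaussian weight e^{-t(h - ħ(m+1/2))²/ħ} is maximized at the same point; hence the L² density |φ_m^{(it)}|²(h) = h^{m+1/2} e^{-h/ħ} e^{-t(h-ħ(m+1/2))²/ħ} concentrates, as t → ∞, at h = ħ(m+1/2) in the sense that for every δ > 0, lim_{t→∞} [∫_{|h - ħ(m+1/2)| > δ} |φ_m^{(it)}|²(h) dh] / [∫₀^∞ |φ_m^{(it)}|²(h) dh] = 0. -/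
/-!
Writing `h ^ c * exp (-h / ℏ) = exp (c log h - h / ℏ)` and comparing with its value at
`h₀ = ℏ c`, maximality reduces to `log x < x - 1` for `x = h / h₀ ≠ 1`.

Concentration is a Laplace-type estimate with `φ h = (h - h₀)² / ℏ`: for `t ≥ 0` the weighted
mass of `{φ > δ² / ℏ}` is at most `e^{-t δ²/ℏ}` times the total mass of `h ^ c * exp (-h / ℏ)`,
while the weighted total mass is at least `e^{-t δ²/(4ℏ)}` times its fixed positive mass on
`(h₀, h₀ + δ/2]`, so their ratio decays like `e^{-3 t δ²/(4ℏ)}`.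
-/

open MeasureTheory Filter Set Real Topology

section Concentration

variable {α : Type*} [MeasurableSpace α] {μ : Measure α} {g φ : α → ℝ} {s : Set α} {t : ℝ}

lemma integrableOn_mul_exp_neg_mul (hg : IntegrableOn g s μ) (hs : MeasurableSet s)
    (hφ : Measurable φ) (hφ0 : ∀ x ∈ s, 0 ≤ φ x) (ht : 0 ≤ t) :
    IntegrableOn (fun x ↦ g x * exp (-(t * φ x))) s μ := by
  refine hg.mul_bdd (c := 1) (hφ.const_mul t).neg.exp.aestronglyMeasurable ?_
  refine ae_restrict_of_forall_mem hs fun x hx ↦ ?_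
  rw [norm_of_nonneg (exp_pos _).le, exp_le_one_iff]
  exact neg_nonpos.2 (mul_nonneg ht (hφ0 x hx))

lemma setIntegral_mul_exp_neg_mul_le {B : Set α} {a : ℝ} (hg : IntegrableOn g s μ)
    (hg0 : ∀ x ∈ s, 0 ≤ g x) (hs : MeasurableSet s) (hφ : Measurable φ)
    (hφ0 : ∀ x ∈ s, 0 ≤ φ x) (hB : MeasurableSet B) (hBs : B ⊆ s) (hBφ : ∀ x ∈ B, a < φ x)
    (ht : 0 ≤ t) :
    ∫ x in B, g x * exp (-(t * φ x)) ∂μ ≤ (∫ x in s, g x ∂μ) * exp (-(t * a)) := by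
  calc ∫ x in B, g x * exp (-(t * φ x)) ∂μ
      ≤ ∫ x in B, g x * exp (-(t * a)) ∂μ := by
        refine setIntegral_mono_on ((integrableOn_mul_exp_neg_mul hg hs hφ hφ0 ht).mono_set hBs)
          ((hg.mono_set hBs).mul_const _) hB fun x hx ↦ ?_
        gcongr
        · exact hg0 x (hBs hx)
        · exact (hBφ x hx).le
    _ = (∫ x in B, g x ∂μ) * exp (-(t * a)) := integral_mul_const _ _
    _ ≤ (∫ x in s, g x ∂μ) * exp (-(t * a)) := mul_le_mul_of_nonneg_right
        (setIntegral_mono_set hg (ae_restrict_of_forall_mem hs hg0) hBs.eventuallyLE)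
        (exp_pos _).le

lemma le_setIntegral_mul_exp_neg_mul {G : Set α} {b : ℝ} (hg : IntegrableOn g s μ)
    (hg0 : ∀ x ∈ s, 0 ≤ g x) (hs : MeasurableSet s) (hφ : Measurable φ)
    (hφ0 : ∀ x ∈ s, 0 ≤ φ x) (hG : MeasurableSet G) (hGs : G ⊆ s) (hGφ : ∀ x ∈ G, φ x ≤ b)
    (ht : 0 ≤ t) :
    (∫ x in G, g x ∂μ) * exp (-(t * b)) ≤ ∫ x in s, g x * exp (-(t * φ x)) ∂μ := by
  have hint := integrableOn_mul_exp_neg_mul hg hs hφ hφ0 ht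
  calc (∫ x in G, g x ∂μ) * exp (-(t * b))
      = ∫ x in G, g x * exp (-(t * b)) ∂μ := (integral_mul_const _ _).symm
    _ ≤ ∫ x in G, g x * exp (-(t * φ x)) ∂μ := by
        refine setIntegral_mono_on ((hg.mono_set hGs).mul_const _) (hint.mono_set hGs) hG
          fun x hx ↦ ?_
        gcongr
        · exact hg0 x (hGs hx)
        · exact hGφ x hx
    _ ≤ ∫ x in s, g x * exp (-(t * φ x)) ∂μ :=
        setIntegral_mono_set hint
          (ae_restrict_of_forall_mem hs fun x hx ↦ mul_nonneg (hg0 x hx) (exp_pos _).le)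
          hGs.eventuallyLE

theorem tendsto_setIntegral_mul_exp_neg_mul_div_setIntegral {B G : Set α} {a b : ℝ}
    (hg : IntegrableOn g s μ) (hg0 : ∀ x ∈ s, 0 ≤ g x) (hs : MeasurableSet s)
    (hφ : Measurable φ) (hφ0 : ∀ x ∈ s, 0 ≤ φ x) (hB : MeasurableSet B) (hBs : B ⊆ s)
    (hBφ : ∀ x ∈ B, a < φ x) (hG : MeasurableSet G) (hGs : G ⊆ s) (hGφ : ∀ x ∈ G, φ x ≤ b)
    (hGg : 0 < ∫ x in G, g x ∂μ) (hba : b < a) :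
    Tendsto (fun t ↦ (∫ x in B, g x * exp (-(t * φ x)) ∂μ) /
      ∫ x in s, g x * exp (-(t * φ x)) ∂μ) atTop (𝓝 0) := by
  have hbound : ∀ᶠ t in atTop, (∫ x in B, g x * exp (-(t * φ x)) ∂μ) /
      ∫ x in s, g x * exp (-(t * φ x)) ∂μ ≤
        (∫ x in s, g x ∂μ) / (∫ x in G, g x ∂μ) * exp (-(t * (a - b))) := by
    filter_upwards [eventually_ge_atTop 0] with t ht
    calc _ ≤ (∫ x in s, g x ∂μ) * exp (-(t * a)) / ((∫ x in G, g x ∂μ) * exp (-(t * b))) :=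
          div_le_div₀ (mul_nonneg (setIntegral_nonneg hs hg0) (exp_pos _).le)
            (setIntegral_mul_exp_neg_mul_le hg hg0 hs hφ hφ0 hB hBs hBφ ht)
            (by positivity) (le_setIntegral_mul_exp_neg_mul hg hg0 hs hφ hφ0 hG hGs hGφ ht)
      _ = _ := by
          rw [mul_div_mul_comm, ← exp_sub]
          ring_nf
  have hnonneg : ∀ t, 0 ≤ (∫ x in B, g x * exp (-(t * φ x)) ∂μ) /
      ∫ x in s, g x * exp (-(t * φ x)) ∂μ := fun t ↦
    div_nonneg (setIntegral_nonneg hB fun x hx ↦ mul_nonneg (hg0 x (hBs hx)) (exp_pos _).le)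
      (setIntegral_nonneg hs fun x hx ↦ mul_nonneg (hg0 x hx) (exp_pos _).le)
  have hdecay : Tendsto (fun t ↦ (∫ x in s, g x ∂μ) / (∫ x in G, g x ∂μ) *
      exp (-(t * (a - b)))) atTop (𝓝 0) := by
    simpa using (tendsto_exp_neg_atTop_nhds_zero.comp
      (tendsto_id.atTop_mul_const (sub_pos.2 hba))).const_mul _
  exact squeeze_zero' (Eventually.of_forall hnonneg) hbound hdecay

end Concentration

section HarmonicOscillator

variable {ℏ c : ℝ}

lemma rpow_mul_exp_neg_div_lt_of_ne (hℏ : 0 < ℏ) (hc : 0 < c) {h : ℝ} (hh : 0 < h)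
    (hne : h ≠ ℏ * c) :
    h ^ c * exp (-h / ℏ) < (ℏ * c) ^ c * exp (-(ℏ * c) / ℏ) := by
  have hℏc : 0 < ℏ * c := mul_pos hℏ hc
  have hlog : log (h / (ℏ * c)) < h / (ℏ * c) - 1 :=
    log_lt_sub_one_of_pos (div_pos hh hℏc) fun e ↦ hne ((div_eq_one_iff_eq hℏc.ne').1 e)
  rw [log_div hh.ne' hℏc.ne'] at hlog
  rw [rpow_def_of_pos hh, rpow_def_of_pos hℏc, ← exp_add, ← exp_add, exp_lt_exp]
  have hscale : c * (h / (ℏ * c)) = h / ℏ := by field_simp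
  have hcancel : -(ℏ * c) / ℏ = -c := by field_simp
  have hlog_c := mul_lt_mul_of_pos_left hlog hc
  rw [mul_sub, mul_sub, hscale, mul_one] at hlog_c
  rw [hcancel, neg_div]
  linarith

lemma integrableOn_rpow_mul_exp_neg_div (hℏ : 0 < ℏ) (hc : -1 < c) :
    IntegrableOn (fun h : ℝ ↦ h ^ c * exp (-h / ℏ)) (Ioi 0) := by
  refine (integrableOn_rpow_mul_exp_neg_mul_rpow hc zero_lt_one (inv_pos.2 hℏ)).congr_fun
    (fun h _ ↦ ?_) measurableSet_Ioi
  dsimp only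
  rw [rpow_one, neg_mul, ← div_eq_inv_mul, neg_div]

theorem tendsto_setIntegral_rpow_mul_exp_gaussian_div (hℏ : 0 < ℏ) (hc : -1 < c) {h₀ δ : ℝ}
    (hh₀ : 0 < h₀) (hδ : 0 < δ) :
    Tendsto (fun t : ℝ ↦
      (∫ h in Ioi 0 ∩ {h | δ < |h - h₀|}, h ^ c * exp (-h / ℏ) * exp (-t * (h - h₀) ^ 2 / ℏ)) /
        ∫ h in Ioi 0, h ^ c * exp (-h / ℏ) * exp (-t * (h - h₀) ^ 2 / ℏ)) atTop (𝓝 0) := by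
  have hweight : ∀ t h : ℝ, -t * (h - h₀) ^ 2 / ℏ = -(t * ((h - h₀) ^ 2 / ℏ)) := by
    intros; ring
  simp only [hweight]
  have hgc : ContinuousOn (fun h : ℝ ↦ h ^ c * exp (-h / ℏ)) (Ioi 0) := by
    refine ContinuousOn.mul (fun h hh ↦ ?_) (by fun_prop)
    exact (continuousAt_rpow_const h c (Or.inl (ne_of_gt hh))).continuousWithinAt
  have hG : 0 < ∫ h in Ioc h₀ (h₀ + δ / 2), h ^ c * exp (-h / ℏ) := by
    rw [← intervalIntegral.integral_of_le (by linarith)]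
    refine intervalIntegral.integral_pos (by linarith)
      (hgc.mono fun h hh ↦ hh₀.trans_le hh.1) (fun h hh ↦ ?_) ⟨h₀, ?_, by positivity⟩
    · have : 0 < h := hh₀.trans hh.1
      positivity
    · constructor <;> linarith
  refine tendsto_setIntegral_mul_exp_neg_mul_div_setIntegral
    (integrableOn_rpow_mul_exp_neg_div hℏ hc) (fun h hh ↦ ?_) measurableSet_Ioi
    (by fun_prop) (fun h _ ↦ by positivity)
    (measurableSet_Ioi.inter (measurableSet_lt measurable_const (by fun_prop)))
    inter_subset_left (fun h hh ↦ ?_) (a := δ ^ 2 / ℏ) measurableSet_Ioc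
    (fun h hh ↦ hh₀.trans hh.1) (fun h hh ↦ ?_) (b := (δ / 2) ^ 2 / ℏ) hG ?_
  · have : 0 < h := hh
    positivity
  · gcongr ?_ / ℏ
    rw [← sq_abs (h - h₀)]
    exact pow_lt_pow_left₀ hh.2 hδ.le two_ne_zero
  · gcongr ?_ / ℏ
    rw [← sq_abs, abs_of_pos (sub_pos.2 hh.1)]
    exact pow_le_pow_left₀ (sub_pos.2 hh.1).le (by linarith [hh.2]) 2
  · gcongr
    linarith

end HarmonicOscillator

/-- The density `|φ_m^{(it)}|²(h) = h^{m+1/2} e^{-h/ħ} e^{-t(h-ħ(m+1/2))²/ħ}` concentrates at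
the Bohr–Sommerfeld leaf `h = ħ(m+1/2)`: the factor `h^{m+1/2} e^{-h/ħ}` has its unique global
maximum on `(0,∞)` at `h = ħ(m+1/2)`, the Gaussian weight is maximized at the same point, and
for every `δ > 0` the mass fraction outside `|h-ħ(m+1/2)| > δ` tends to `0` as `t → ∞`. -/
theorem stmt16 (ℏ : ℝ) (hℏ : 0 < ℏ) (m : ℕ) :
    (∀ h : ℝ, 0 < h → h ≠ ℏ * (m + 1 / 2) →
      h ^ ((m : ℝ) + 1 / 2) * Real.exp (-h / ℏ)
        < (ℏ * (m + 1 / 2)) ^ ((m : ℝ) + 1 / 2) * Real.exp (-(ℏ * (m + 1 / 2)) / ℏ)) ∧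
    (∀ t : ℝ, 0 < t → ∀ h : ℝ, h ≠ ℏ * (m + 1 / 2) →
      Real.exp (-t * (h - ℏ * (m + 1 / 2)) ^ 2 / ℏ)
        < Real.exp (-t * (ℏ * (m + 1 / 2) - ℏ * (m + 1 / 2)) ^ 2 / ℏ)) ∧
    (∀ δ : ℝ, 0 < δ →
      Tendsto
        (fun t : ℝ =>
          (∫ h in Set.Ioi (0 : ℝ) ∩ {h : ℝ | δ < |h - ℏ * (m + 1 / 2)|},
              h ^ ((m : ℝ) + 1 / 2) * Real.exp (-h / ℏ)
                * Real.exp (-t * (h - ℏ * (m + 1 / 2)) ^ 2 / ℏ)) /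
            (∫ h in Set.Ioi (0 : ℝ),
              h ^ ((m : ℝ) + 1 / 2) * Real.exp (-h / ℏ)
                * Real.exp (-t * (h - ℏ * (m + 1 / 2)) ^ 2 / ℏ)))
        atTop (nhds 0)) := by
  have hc : (0 : ℝ) < m + 1 / 2 := by positivity
  refine ⟨fun h hh hne ↦ rpow_mul_exp_neg_div_lt_of_ne hℏ hc hh hne, ?_, fun δ hδ ↦
    tendsto_setIntegral_rpow_mul_exp_gaussian_div hℏ (by linarith) (mul_pos hℏ hc) hδ⟩
  intro t ht h hne
  have hsq : 0 < (h - ℏ * (m + 1 / 2)) ^ 2 := sq_pos_of_ne_zero (sub_ne_zero.2 hne)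
  rw [sub_self, exp_lt_exp, zero_pow two_ne_zero, mul_zero, zero_div, neg_mul, neg_div,
    neg_neg_iff_pos]
  positivity
end
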